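/- Let p ∈ (0,1), let m ≥ 2 be an integer, let n ≥ 1 and 1 ≤ k ≤ n be integers with f = k/n. Let X_1, …, X_n be independent {0,1}-valued random variables on a probability space, exactly k of which satisfy P[X_j = 1] = p + (1-p)/m and the remaining n−k of which satisfy P[X_j = 1] = (1-p)/m. Let O* = X_1 + ⋯ + X_n, μ = n·(f·p + (1-p)/m), and F' = (O*/n − (1-p)/m)/p. Then for every ε > 0, setting θ = ε·n·p·f/μ, P[(F' − f)/f > ε] < (e^θ/(1+θ)^{1+θ})^μ. -/

import Mathlib

/-!
Chernoff's method. By Markov's inequality applied to `exp (t · O*)`, with `t = log (1 + θ)`,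
`P[O* ≥ (1 + θ) μ] ≤ e^{-t(1+θ)μ} E[e^{t O*}]`. Independence factors the moment generating
function into `∏ (1 + θ q_j)` over the success probabilities `q_j`, and `1 + x < e^x` bounds this
strictly by `e^{θ μ}`, since `∑ q_j = μ`. Finally, the relative-error event of the reconstructed
frequency is exactly the event `O* > (1 + θ) μ`.
-/

set_option autoImplicit false

open MeasureTheory ProbabilityTheory Real Finset

lemma prod_one_add_lt_exp_sum {ι : Type*} {s : Finset ι} {x : ι → ℝ}
    (hx : ∀ i ∈ s, 0 ≤ x i) (hpos : 0 < ∑ i ∈ s, x i) :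
    ∏ i ∈ s, (1 + x i) < exp (∑ i ∈ s, x i) := by
  obtain ⟨j, hj, hxj⟩ := exists_lt_of_sum_lt (f := fun _ => 0) (g := x)
    (by rwa [sum_const_zero])
  rw [exp_sum]
  refine prod_lt_prod (fun i hi => by linarith [hx i hi]) (fun i _ => ?_) ⟨j, hj, ?_⟩
  · linarith [add_one_le_exp (x i)]
  · linarith [add_one_lt_exp hxj.ne']

lemma exp_div_one_add_rpow_rpow_eq {δ : ℝ} (hδ : 0 < 1 + δ) (μ : ℝ) :
    (exp δ / (1 + δ) ^ (1 + δ)) ^ μ = exp (-log (1 + δ) * ((1 + δ) * μ)) * exp (δ * μ) := by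
  have hpow : 0 < (1 + δ) ^ (1 + δ) := rpow_pos_of_pos hδ _
  rw [rpow_def_of_pos (div_pos (exp_pos δ) hpow), log_div (exp_pos δ).ne' hpow.ne', log_exp,
    log_rpow hδ, ← exp_add]
  ring_nf

lemma sum_eq_card_mul_add_of_eqOn_of_eqOn_compl {ι : Type*} [Fintype ι] (K : Finset ι)
    {g : ι → ℝ} {a b : ℝ} (ha : ∀ j ∈ K, g j = a) (hb : ∀ j ∉ K, g j = b) :
    ∑ j, g j = K.card * a + (Fintype.card ι - K.card) * b := by
  classical
  rw [← sum_add_sum_compl K, sum_congr rfl ha, sum_congr rfl fun j hj => hb j (mem_compl.1 hj),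
    sum_const, sum_const, card_compl, nsmul_eq_mul, nsmul_eq_mul,
    Nat.cast_sub K.card_le_univ]

lemma lt_of_relative_error_gt {p q f n O ε : ℝ} (hp : 0 < p) (hf : 0 < f) (hn : 0 < n)
    (h : ((O / n - q) / p - f) / f > ε) : n * ((1 + ε) * f * p + q) < O := by
  have h₁ : (1 + ε) * f < (O / n - q) / p := by linarith [(lt_div_iff₀ hf).1 h]
  have h₂ : (1 + ε) * f * p + q < O / n := by linarith [(lt_div_iff₀ hp).1 h₁]
  linarith [(lt_div_iff₀' hn).1 h₂]

lemma exp_mul_eq_one_add_indicator {Ω : Type*} {Y : Ω → ℝ} (hY : ∀ ω, Y ω = 0 ∨ Y ω = 1)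
    (t : ℝ) :
    (fun ω => exp (t * Y ω)) = fun ω => 1 + (exp t - 1) * {ω | Y ω = 1}.indicator 1 ω := by
  funext ω
  rcases hY ω with h | h <;> simp [h, Set.indicator]

section Bernoulli

variable {Ω : Type*} [MeasurableSpace Ω] {P : Measure Ω}

lemma integrable_exp_mul_of_zero_or_one [IsFiniteMeasure P] {Y : Ω → ℝ} (hYm : Measurable Y)
    (hY : ∀ ω, Y ω = 0 ∨ Y ω = 1) (t : ℝ) : Integrable (fun ω => exp (t * Y ω)) P := by
  rw [exp_mul_eq_one_add_indicator hY]
  exact (integrable_const 1).add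
    (((integrable_const 1).indicator (hYm (measurableSet_singleton 1))).const_mul _)

lemma mgf_of_zero_or_one [IsProbabilityMeasure P] {Y : Ω → ℝ} (hYm : Measurable Y)
    (hY : ∀ ω, Y ω = 0 ∨ Y ω = 1) (t : ℝ) :
    mgf Y P t = 1 + (exp t - 1) * P.real {ω | Y ω = 1} := by
  have hs : MeasurableSet {ω | Y ω = 1} := hYm (measurableSet_singleton 1)
  rw [mgf, exp_mul_eq_one_add_indicator hY,
    integral_add (integrable_const 1) (((integrable_const 1).indicator hs).const_mul _),
    integral_const_mul, integral_indicator_one hs]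
  simp

theorem measureReal_sum_ge_lt_chernoff [IsProbabilityMeasure P] {ι : Type*} [Fintype ι]
    {X : ι → Ω → ℝ} (hmeas : ∀ i, Measurable (X i)) (hindep : iIndepFun X P)
    (hval : ∀ i ω, X i ω = 0 ∨ X i ω = 1) {μ : ℝ}
    (hμ : ∑ i, P.real {ω | X i ω = 1} = μ) (hμ0 : 0 < μ) {δ : ℝ} (hδ : 0 < δ) :
    P.real {ω | (1 + δ) * μ ≤ ∑ i, X i ω} < (exp δ / (1 + δ) ^ (1 + δ)) ^ μ := by
  set t := log (1 + δ)
  have het : exp t = 1 + δ := exp_log (by linarith)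
  have hint : Integrable (fun ω => exp (t * (∑ i, X i) ω)) P :=
    hindep.integrable_exp_mul_sum hmeas fun i _ =>
      integrable_exp_mul_of_zero_or_one (hmeas i) (hval i) t
  have hmgf : mgf (∑ i, X i) P t = ∏ i, (1 + δ * P.real {ω | X i ω = 1}) := by
    rw [hindep.mgf_sum hmeas]
    exact prod_congr rfl fun i _ => by rw [mgf_of_zero_or_one (hmeas i) (hval i), het]; ring_nf
  have hprod : ∏ i, (1 + δ * P.real {ω | X i ω = 1}) < exp (δ * μ) := by
    rw [← hμ, mul_sum]
    exact prod_one_add_lt_exp_sum (fun i _ => by positivity)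
      (by rw [← mul_sum, hμ]; positivity)
  calc P.real {ω | (1 + δ) * μ ≤ ∑ i, X i ω}
      ≤ exp (-t * ((1 + δ) * μ)) * mgf (∑ i, X i) P t := by
        simpa only [Finset.sum_apply] using
          measure_ge_le_exp_mul_mgf ((1 + δ) * μ) (log_pos (by linarith)).le hint
    _ < exp (-t * ((1 + δ) * μ)) * exp (δ * μ) := by rw [hmgf]; gcongr
    _ = (exp δ / (1 + δ) ^ (1 + δ)) ^ μ := (exp_div_one_add_rpow_rpow_eq (by linarith) μ).symm

end Bernoulli

theorem mle_upper_tail_bound_general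
    {Ω : Type*} [MeasureSpace Ω] [IsProbabilityMeasure (ℙ : Measure Ω)]
    (p : ℝ) (hp0 : 0 < p) (hp1 : p < 1)
    (m : ℕ)
    (n k : ℕ) (hk1 : 1 ≤ k) (hkn : k ≤ n)
    (f : ℝ) (hf : f = (k : ℝ) / n)
    (X : Fin n → Ω → ℝ)
    (hmeas : ∀ j, Measurable (X j))
    (hindep : iIndepFun X ℙ)
    (hval : ∀ j ω, X j ω = 0 ∨ X j ω = 1)
    (K : Finset (Fin n)) (hKcard : K.card = k)
    (hin : ∀ j ∈ K, (ℙ {ω | X j ω = 1}).toReal = p + (1 - p) / m)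
    (hout : ∀ j ∉ K, (ℙ {ω | X j ω = 1}).toReal = (1 - p) / m)
    (O : Ω → ℝ) (hO : ∀ ω, O ω = ∑ j, X j ω)
    (μ : ℝ) (hμ : μ = n * (f * p + (1 - p) / m))
    (F' : Ω → ℝ) (hF' : ∀ ω, F' ω = (O ω / n - (1 - p) / m) / p)
    (ε : ℝ) (hε : 0 < ε)
    (θ : ℝ) (hθ : θ = ε * n * p * f / μ) :
    (ℙ {ω | (F' ω - f) / f > ε}).toReal <
      (Real.exp θ / (1 + θ) ^ (1 + θ)) ^ μ := by
  have hn0 : (0 : ℝ) < n := by exact_mod_cast hk1.trans hkn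
  have hf0 : 0 < f := by rw [hf]; exact div_pos (by exact_mod_cast hk1) hn0
  have hq : 0 ≤ (1 - p) / m := div_nonneg (by linarith) m.cast_nonneg
  have hμ0 : 0 < μ := by rw [hμ]; exact mul_pos hn0 (add_pos_of_pos_of_nonneg (by positivity) hq)
  have hexp : ∑ j, (ℙ {ω | X j ω = 1}).toReal = μ := by
    rw [sum_eq_card_mul_add_of_eqOn_of_eqOn_compl K hin hout, hKcard, Fintype.card_fin, hμ, hf]
    field_simp
    ring
  have hthreshold : (1 + θ) * μ = n * ((1 + ε) * f * p + (1 - p) / m) := by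
    rw [hθ]
    field_simp
    rw [hμ]
    ring
  have hevent : {ω | (F' ω - f) / f > ε} ⊆ {ω | (1 + θ) * μ ≤ ∑ j, X j ω} := fun ω hω => by
    rw [Set.mem_ofPred_eq, hF'] at hω
    rw [Set.mem_ofPred_eq, hthreshold, ← hO]
    exact (lt_of_relative_error_gt hp0 hf0 hn0 hω).le
  calc (ℙ {ω | (F' ω - f) / f > ε}).toReal ≤ (ℙ {ω | (1 + θ) * μ ≤ ∑ j, X j ω}).toReal :=
        measureReal_mono hevent
    _ < _ := measureReal_sum_ge_lt_chernoff hmeas hindep hval hexp hμ0 (by rw [hθ]; positivity)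

/-- Corollary 4.6, upper tail with the full Chernoff bound: for the observed count
`O* = ∑ X_j` of independent perturbation indicators (k of success probability
`p + (1-p)/m`, `n−k` of success probability `(1-p)/m`), `μ = n·(f·p + (1-p)/m)`,
`f = k/n`, and MLE `F' = (O*/n − (1-p)/m)/p`, for every `ε > 0`, with
`θ = ε·n·p·f/μ`, `P[(F' − f)/f > ε] < (e^θ/(1+θ)^{1+θ})^μ` (real exponentiation). -/
theorem mle_upper_tail_bound
    {Ω : Type*} [MeasureSpace Ω] [IsProbabilityMeasure (ℙ : Measure Ω)]
    (p : ℝ) (hp0 : 0 < p) (hp1 : p < 1)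
    (m : ℕ) (hm : 2 ≤ m)
    (n k : ℕ) (hn : 1 ≤ n) (hk1 : 1 ≤ k) (hkn : k ≤ n)
    (f : ℝ) (hf : f = (k : ℝ) / n)
    (X : Fin n → Ω → ℝ)
    (hmeas : ∀ j, Measurable (X j))
    (hindep : iIndepFun X ℙ)
    (hval : ∀ j ω, X j ω = 0 ∨ X j ω = 1)
    (K : Finset (Fin n)) (hKcard : K.card = k)
    (hin : ∀ j ∈ K, (ℙ {ω | X j ω = 1}).toReal = p + (1 - p) / m)
    (hout : ∀ j ∉ K, (ℙ {ω | X j ω = 1}).toReal = (1 - p) / m)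
    (O : Ω → ℝ) (hO : ∀ ω, O ω = ∑ j, X j ω)
    (μ : ℝ) (hμ : μ = n * (f * p + (1 - p) / m))
    (F' : Ω → ℝ) (hF' : ∀ ω, F' ω = (O ω / n - (1 - p) / m) / p)
    (ε : ℝ) (hε : 0 < ε)
    (θ : ℝ) (hθ : θ = ε * n * p * f / μ) :
    (ℙ {ω | (F' ω - f) / f > ε}).toReal <
      (Real.exp θ / (1 + θ) ^ (1 + θ)) ^ μ :=
  mle_upper_tail_bound_general p hp0 hp1 m n k hk1 hkn f hf X hmeas hindep hval K hKcard hin hout O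
    hO μ hμ F' hF' ε hε θ hθ
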